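/- arXiv:2003.01701 — 2 statements merged into one kernel-verified Lean document; each statement's English description precedes it below -/
import Mathlib

section
/- Let R(s) = Σ_{i=1}^n R_i(s) e^{-h_i s} be a delay system with each R_i rational, stable, proper, and with real coefficients, and define the conjugate R̄(s) := e^{-h_n s} R(−s) M_C(s), where M_C is a finite Blaschke product (with real coefficients) whose zeros are exactly the right half-plane poles of s ↦ R(−s), with matching multiplicities. Then R̄ is bounded and analytic on the open right half-plane, and |R̄(jω)| = |R(jω)| for all ω ∈ ℝ. -/
open Complex Polynomial Filter Finset

/-- The `i`-th rational term `R_i(s) = p_i(s)/q_i(s)` viewed as a function on `ℂ`. -/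
noncomputable def ratTerm {n : ℕ} (p q : Fin n → Polynomial ℝ) (i : Fin n) (s : ℂ) : ℂ :=
  ((p i).map (algebraMap ℝ ℂ)).eval s / ((q i).map (algebraMap ℝ ℂ)).eval s

/-- The delay system `R(s) = ∑ᵢ R_i(s) e^{-h_i s}`. -/
noncomputable def delaySys {n : ℕ} (p q : Fin n → Polynomial ℝ) (h : Fin n → ℝ) (s : ℂ) : ℂ :=
  ∑ i : Fin n, ratTerm p q i s * Complex.exp (-(h i : ℂ) * s)

/-- The conjugate system `R̄(s) = e^{-h_n s} R(-s) M_C(s)`, where `M_C` is the finite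
Blaschke product with zeros `w₁,…,w_m` (the right half-plane reflections of the stable
poles of the `R_i`). -/
noncomputable def conjSys {n m : ℕ} (p q : Fin n → Polynomial ℝ) (h : Fin n → ℝ)
    (hlast : ℝ) (w : Fin m → ℂ) (s : ℂ) : ℂ :=
  Complex.exp (-(hlast : ℂ) * s) * delaySys p q h (-s) *
    ∏ k : Fin m, (s - w k) / (s + starRingEnd ℂ (w k))

/-! On the closed right half-plane, `R̄(s)` agrees with `∑ᵢ e^{-(hₙ - hᵢ) s} Nᵢ(s) / D(s)`, where
`D(s) = a ∏ₖ (s + w̄ₖ)` and `Nᵢ(s) = pᵢ(-s) ∏_{j ≠ i} qⱼ(-s)`: the factorisation of `∏ⱼ qⱼ(-s)` lets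
the numerators `s - wₖ` of `M_C` cancel the denominators of the `Rᵢ(-s)`. The zeros `-w̄ₖ` of `D`
lie in the open left half-plane, properness gives `deg Nᵢ ≤ deg D`, and `hᵢ ≤ hₙ` bounds the
exponentials by `1`, so this extension is holomorphic and bounded. On the imaginary axis,
`R(-jω)` is the conjugate of `R(jω)` because the coefficients are real, and every Blaschke
factor `(jω - wₖ) / (jω + w̄ₖ)` has modulus `1`. -/

open scoped ComplexConjugate

theorem Polynomial.exists_norm_eval_div_le_of_degree_le {𝕜 : Type*} [NormedField 𝕜]
    [ProperSpace 𝕜] {P Q : 𝕜[X]} (hdeg : P.degree ≤ Q.degree) {S : Set 𝕜} (hS : IsClosed S)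
    (hQ : ∀ z ∈ S, Q.eval z ≠ 0) : ∃ C, ∀ z ∈ S, ‖P.eval z / Q.eval z‖ ≤ C := by
  obtain ⟨c, hc⟩ := (isBigO_cobounded_of_degree_le hdeg).bound
  obtain ⟨r, -, hr⟩ := (Metric.hasBasis_cobounded_compl_closedBall (0 : 𝕜)).eventually_iff.mp hc
  obtain ⟨C, hC⟩ := ((isCompact_closedBall 0 r).inter_right hS).exists_bound_of_continuousOn
    (P.continuous.continuousOn.div Q.continuous.continuousOn fun z hz => hQ z hz.2)
  refine ⟨max c C, fun z hz => ?_⟩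
  by_cases hzr : z ∈ Metric.closedBall 0 r
  · exact (hC z ⟨hzr, hz⟩).trans (le_max_right _ _)
  · rw [norm_div, div_le_iff₀ (norm_pos_iff.2 (hQ z hz))]
    exact (hr hzr).trans (mul_le_mul_of_nonneg_right (le_max_left _ _) (norm_nonneg _))

theorem Complex.norm_exp_ofReal_mul_le_one {c : ℝ} (hc : c ≤ 0) {s : ℂ} (hs : 0 ≤ s.re) :
    ‖exp (c * s)‖ ≤ 1 := by
  rw [norm_exp, re_ofReal_mul, Real.exp_le_one_iff]
  exact mul_nonpos_of_nonpos_of_nonneg hc hs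

theorem Complex.norm_exp_ofReal_mul_I_mul (c ω : ℝ) : ‖exp (c * (I * ω))‖ = 1 := by
  rw [norm_exp]
  simp

theorem Complex.norm_I_mul_sub_div_I_mul_add_conj {w : ℂ} (hw : w.re ≠ 0) (ω : ℝ) :
    ‖(I * ω - w) / (I * ω + conj w)‖ = 1 := by
  have hconj : conj (I * ω - w) = -(I * ω + conj w) := by
    simp only [map_sub, map_mul, conj_I, conj_ofReal]
    ring
  have hden : I * ω + conj w ≠ 0 := fun h0 => hw (by simpa using congrArg re h0)
  rw [norm_div, ← Complex.norm_conj (I * ω - w), hconj, norm_neg,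
    div_self (norm_ne_zero_iff.2 hden)]

theorem delaySys_conj {n : ℕ} (p q : Fin n → ℝ[X]) (h : Fin n → ℝ) (z : ℂ) :
    delaySys p q h (conj z) = conj (delaySys p q h z) := by
  simp only [delaySys, ratTerm, eval_map_algebraMap, aeval_conj, map_sum, map_mul, map_div₀,
    ← exp_conj, map_neg, conj_ofReal]

theorem norm_conjSys_I_mul {n m : ℕ} (p q : Fin n → ℝ[X]) (h : Fin n → ℝ) (hl : ℝ)
    {w : Fin m → ℂ} (hw : ∀ k, (w k).re ≠ 0) (ω : ℝ) :
    ‖conjSys p q h hl w (I * ω)‖ = ‖delaySys p q h (I * ω)‖ := by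
  have hneg : -(I * ω) = conj (I * ω) := by simp
  rw [conjSys, norm_mul, norm_mul, hneg, delaySys_conj, norm_conj, norm_prod,
    ← ofReal_neg, norm_exp_ofReal_mul_I_mul,
    Finset.prod_eq_one fun k _ => norm_I_mul_sub_div_I_mul_add_conj (hw k) ω, one_mul, mul_one]

section ConjugateExtension

variable {n m : ℕ}

noncomputable def mapCompNeg (P : ℝ[X]) : ℂ[X] := (P.map (algebraMap ℝ ℂ)).comp (-X)

@[simp]
theorem eval_mapCompNeg (P : ℝ[X]) (s : ℂ) :
    (mapCompNeg P).eval s = (P.map (algebraMap ℝ ℂ)).eval (-s) := by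
  simp [mapCompNeg]

@[simp]
theorem natDegree_mapCompNeg (P : ℝ[X]) : (mapCompNeg P).natDegree = P.natDegree := by
  simp [mapCompNeg, natDegree_comp]

noncomputable def conjNum (p q : Fin n → ℝ[X]) (i : Fin n) : ℂ[X] :=
  mapCompNeg (p i) * ∏ j ∈ univ.erase i, mapCompNeg (q j)

noncomputable def conjDen (a : ℂ) (w : Fin m → ℂ) : ℂ[X] :=
  C a * ∏ k, (X + C (conj (w k)))

theorem eval_conjDen (a : ℂ) (w : Fin m → ℂ) (s : ℂ) :
    (conjDen a w).eval s = a * ∏ k, (s + conj (w k)) := by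
  simp [conjDen, eval_prod]

theorem eval_conjDen_ne_zero {a : ℂ} (ha : a ≠ 0) {w : Fin m → ℂ} (hw : ∀ k, 0 < (w k).re)
    {s : ℂ} (hs : 0 ≤ s.re) : (conjDen a w).eval s ≠ 0 := by
  rw [eval_conjDen]
  refine mul_ne_zero ha (prod_ne_zero_iff.2 fun k _ h0 => ?_)
  have := congrArg re h0
  simp only [add_re, conj_re, zero_re] at this
  linarith [hw k]

theorem degree_conjDen {a : ℂ} (ha : a ≠ 0) (w : Fin m → ℂ) : (conjDen a w).degree = m := by
  rw [conjDen, degree_C_mul ha, degree_prod_of_monic _ _ fun k _ => monic_X_add_C _]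
  simp

theorem degree_conjNum_le {p q : Fin n → ℝ[X]} (hproper : ∀ i, (p i).natDegree ≤ (q i).natDegree)
    {a : ℂ} (ha : a ≠ 0) {w : Fin m → ℂ}
    (hfact : ∀ s : ℂ, (∏ i, ((q i).map (algebraMap ℝ ℂ)).eval (-s)) = a * ∏ k, (s - w k))
    (i : Fin n) : (conjNum p q i).degree ≤ (conjDen a w).degree := by
  have hQ : ∏ j, mapCompNeg (q j) = C a * ∏ k, (X - C (w k)) :=
    Polynomial.funext fun s => by simpa [eval_prod] using hfact s
  have hQ0 : ∏ j, mapCompNeg (q j) ≠ 0 := by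
    rw [hQ]
    exact mul_ne_zero (C_ne_zero.2 ha) (monic_prod_of_monic _ _ fun k _ => monic_X_sub_C _).ne_zero
  have hQdeg : (∏ j, mapCompNeg (q j)).natDegree = m := by
    rw [hQ, natDegree_C_mul ha, natDegree_prod_of_monic _ _ fun k _ => monic_X_sub_C _]
    simp
  rw [← mul_prod_erase _ _ (mem_univ i)] at hQ0 hQdeg
  obtain ⟨hqi, hrest⟩ := mul_ne_zero_iff.1 hQ0
  rw [degree_conjDen ha, ← hQdeg, natDegree_mul hqi hrest, conjNum]
  refine degree_le_of_natDegree_le (natDegree_mul_le_of_le ?_ le_rfl)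
  simpa using hproper i

noncomputable def conjSysExt (p q : Fin n → ℝ[X]) (h : Fin n → ℝ) (hl : ℝ) (a : ℂ)
    (w : Fin m → ℂ) (s : ℂ) : ℂ :=
  ∑ i, exp ((h i - hl : ℝ) * s) * ((conjNum p q i).eval s / (conjDen a w).eval s)

variable {p q : Fin n → ℝ[X]} {h : Fin n → ℝ} {hl : ℝ} {a : ℂ} {w : Fin m → ℂ}

theorem differentiableOn_conjSysExt (ha : a ≠ 0) (hw : ∀ k, 0 < (w k).re) :
    DifferentiableOn ℂ (conjSysExt p q h hl a w) {s | 0 < s.re} := by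
  refine DifferentiableOn.fun_sum fun i _ => ?_
  refine (differentiable_exp.comp (differentiable_id.const_mul _)).differentiableOn.mul ?_
  exact (conjNum p q i).differentiable.differentiableOn.div
    (conjDen a w).differentiable.differentiableOn fun s hs => eval_conjDen_ne_zero ha hw hs.le

theorem exists_bound_conjSysExt (hle : ∀ i, h i ≤ hl)
    (hproper : ∀ i, (p i).natDegree ≤ (q i).natDegree) (ha : a ≠ 0) (hw : ∀ k, 0 < (w k).re)
    (hfact : ∀ s : ℂ, (∏ i, ((q i).map (algebraMap ℝ ℂ)).eval (-s)) = a * ∏ k, (s - w k)) :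
    ∃ C, ∀ s : ℂ, 0 ≤ s.re → ‖conjSysExt p q h hl a w s‖ ≤ C := by
  choose C hC using fun i => exists_norm_eval_div_le_of_degree_le
    (degree_conjNum_le hproper ha hfact i) (isClosed_le continuous_const continuous_re)
    fun s hs => eval_conjDen_ne_zero ha hw hs
  refine ⟨∑ i, C i, fun s hs => (norm_sum_le _ _).trans (sum_le_sum fun i _ => ?_)⟩
  rw [norm_mul, ← one_mul (C i)]
  exact mul_le_mul (norm_exp_ofReal_mul_le_one (sub_nonpos.2 (hle i)) hs) (hC i s hs)
    (norm_nonneg _) zero_le_one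

theorem conjSys_eq_conjSysExt (ha : a ≠ 0) (hw : ∀ k, 0 < (w k).re)
    (hfact : ∀ s : ℂ, (∏ i, ((q i).map (algebraMap ℝ ℂ)).eval (-s)) = a * ∏ k, (s - w k))
    {s : ℂ} (hs : 0 ≤ s.re) (hq : ∏ i, ((q i).map (algebraMap ℝ ℂ)).eval (-s) ≠ 0) :
    conjSys p q h hl w s = conjSysExt p q h hl a w s := by
  have hD := eval_conjDen_ne_zero ha hw hs
  have hM : ∏ k, (s - w k) / (s + conj (w k)) =
      (∏ j, ((q j).map (algebraMap ℝ ℂ)).eval (-s)) / (conjDen a w).eval s := by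
    rw [prod_div_distrib, hfact s, eval_conjDen, mul_div_mul_left _ _ ha]
  rw [conjSys, hM, delaySys, mul_sum, sum_mul]
  refine sum_congr rfl fun i _ => ?_
  have hqi := prod_ne_zero_iff.1 hq i (mem_univ i)
  rw [ratTerm, conjNum, eval_mul, eval_prod, ← mul_prod_erase _ _ (mem_univ i)]
  simp only [eval_mapCompNeg]
  rw [ofReal_sub, sub_mul, sub_eq_add_neg, exp_add]
  field_simp

end ConjugateExtension

theorem stmt10_general (n : ℕ) (hn : 0 < n) (p q : Fin n → Polynomial ℝ) (h : Fin n → ℝ)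
    (hmono : StrictMono h)
    (hproper : ∀ i, (p i).natDegree ≤ (q i).natDegree)
    (m : ℕ) (w : Fin m → ℂ) (hw : ∀ k, 0 < (w k).re) (a : ℂ) (ha : a ≠ 0)
    -- the zeros of the Blaschke product `M_C`, with multiplicities, are exactly the
    -- right half-plane roots of `s ↦ ∏ᵢ qᵢ(-s)`, i.e. the reflected stable poles:
    (hfact : ∀ s : ℂ, (∏ i : Fin n, ((q i).map (algebraMap ℝ ℂ)).eval (-s)) =
      a * ∏ k : Fin m, (s - w k)) :
    (∃ G : ℂ → ℂ, DifferentiableOn ℂ G {s : ℂ | 0 < s.re} ∧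
      (∃ C : ℝ, ∀ s : ℂ, 0 < s.re → ‖G s‖ ≤ C) ∧
      ∀ s : ℂ, 0 < s.re → (∏ i : Fin n, ((q i).map (algebraMap ℝ ℂ)).eval (-s)) ≠ 0 →
        G s = conjSys p q h (h ⟨n - 1, Nat.sub_lt hn one_pos⟩) w s) ∧
    ∀ ω : ℝ, ‖conjSys p q h (h ⟨n - 1, Nat.sub_lt hn one_pos⟩) w
        (Complex.I * ω)‖ = ‖delaySys p q h (Complex.I * ω)‖ := by
  set hl := h ⟨n - 1, Nat.sub_lt hn one_pos⟩
  have hle : ∀ i, h i ≤ hl := fun i => hmono.monotone (Fin.le_def.2 (Nat.le_sub_one_of_lt i.2))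
  obtain ⟨C, hC⟩ := exists_bound_conjSysExt hle hproper ha hw hfact
  refine ⟨⟨conjSysExt p q h hl a w, differentiableOn_conjSysExt ha hw,
    ⟨C, fun s hs => hC s hs.le⟩, fun s hs hq => (conjSys_eq_conjSysExt ha hw hfact hs.le hq).symm⟩,
    norm_conjSys_I_mul p q h hl fun k => (hw k).ne'⟩

/-- the conjugate `R̄(s) = e^{-hₙ s} R(-s) M_C(s)` of a delay system with
stable proper real-rational coefficients extends to a bounded analytic function on the
open right half-plane, and `|R̄(jω)| = |R(jω)|` for all real `ω`. -/
theorem stmt10 (n : ℕ) (hn : 0 < n) (p q : Fin n → Polynomial ℝ) (h : Fin n → ℝ)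
    (hpos : ∀ i, 0 ≤ h i) (hmono : StrictMono h)
    (hstable : ∀ i, ∀ z : ℂ, 0 ≤ z.re → ((q i).map (algebraMap ℝ ℂ)).eval z ≠ 0)
    (hproper : ∀ i, (p i).natDegree ≤ (q i).natDegree)
    (m : ℕ) (w : Fin m → ℂ) (hw : ∀ k, 0 < (w k).re) (a : ℂ) (ha : a ≠ 0)
    -- the zeros of the Blaschke product `M_C`, with multiplicities, are exactly the
    -- right half-plane roots of `s ↦ ∏ᵢ qᵢ(-s)`, i.e. the reflected stable poles:
    (hfact : ∀ s : ℂ, (∏ i : Fin n, ((q i).map (algebraMap ℝ ℂ)).eval (-s)) =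
      a * ∏ k : Fin m, (s - w k)) :
    (∃ G : ℂ → ℂ, DifferentiableOn ℂ G {s : ℂ | 0 < s.re} ∧
      (∃ C : ℝ, ∀ s : ℂ, 0 < s.re → ‖G s‖ ≤ C) ∧
      ∀ s : ℂ, 0 < s.re → (∏ i : Fin n, ((q i).map (algebraMap ℝ ℂ)).eval (-s)) ≠ 0 →
        G s = conjSys p q h (h ⟨n - 1, Nat.sub_lt hn one_pos⟩) w s) ∧
    ∀ ω : ℝ, ‖conjSys p q h (h ⟨n - 1, Nat.sub_lt hn one_pos⟩) w
        (Complex.I * ω)‖ = ‖delaySys p q h (Complex.I * ω)‖ :=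
  stmt10_general n hn p q h hmono hproper m w hw a ha hfact
end

section
/- Let R(s) = Σ_{i=1}^n R_i(s) e^{-h_i s} with each R_i rational, stable and proper, relative degrees d_i, and suppose d_1 = max{d_2,…,d_n} (neutral type). Let ξ_i = lim_{ω→∞} R_i(jω)/R_1(jω). Then there exists σ_1 > 0 such that for all s = σ + jω with σ ≥ σ_1, |R(s)e^{h_1 s}/R_1(s)| ≥ 1 − Σ_{i=2}^n |ξ_i| e^{-(h_i − h_1)σ} · 2 > 0 for σ large enough; in particular, all zeros of R in the right half-plane satisfy Re(s) ≤ σ_1, i.e., the real parts of the unstable zeros of a neutral-type delay system are uniformly bounded. -/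
/-! Work along the filter `Re s → ∞`. A finite limit of `R_i/R_1` on the imaginary axis forces
`deg (p_i q_1) ≤ deg (p_1 q_i)`, hence `R_i = O(R_1)` for large `|s|` in the right half-plane,
where the stable denominators do not vanish. As `e^{-h_i s} = o(e^{-h_1 s})` for `h_1 < h_i`,
every term of `R` but `R_1(s) e^{-h_1 s}` is negligible against it, and that term has no zeros
for large `|s|`. -/

open Complex Polynomial Filter Finset

open Asymptotics Bornology Topology

namespace Polynomial

variable {𝕜 : Type*} [NormedField 𝕜]

lemma eventually_cobounded_eval_ne_zero {P : 𝕜[X]} (hP : P ≠ 0) :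
    ∀ᶠ z in cobounded 𝕜, P.eval z ≠ 0 :=
  (finite_setOfPred_isRoot hP).isBounded

lemma degree_le_of_tendsto_eval_div {A B : 𝕜[X]} (hB : B ≠ 0) {α : Type*} {l : Filter α}
    [l.NeBot] {z : α → 𝕜} (hz : Tendsto z l (cobounded 𝕜)) {ξ : 𝕜}
    (hlim : Tendsto (fun x => A.eval (z x) / B.eval (z x)) l (𝓝 ξ)) :
    A.degree ≤ B.degree := by
  by_contra! hlt
  have hA : A ≠ 0 := ne_zero_of_degree_gt hlt
  have hBA : Tendsto (fun x => B.eval (z x) / A.eval (z x)) l (𝓝 0) :=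
    ((isLittleO_cobounded_of_degree_lt hlt).comp_tendsto hz).tendsto_div_nhds_zero
  have hone : ∀ᶠ x in l, A.eval (z x) / B.eval (z x) * (B.eval (z x) / A.eval (z x)) = 1 := by
    filter_upwards [hz.eventually (eventually_cobounded_eval_ne_zero hA),
      hz.eventually (eventually_cobounded_eval_ne_zero hB)] with x hAx hBx
    field_simp
  have := tendsto_nhds_unique ((hlim.mul hBA).congr' hone) tendsto_const_nhds
  simp at this

lemma isBigO_eval_div_eval {A B C D : 𝕜[X]} (hdeg : (A * D).degree ≤ (C * B).degree)
    {l : Filter 𝕜} (hl : l ≤ cobounded 𝕜) (hB : ∀ᶠ z in l, B.eval z ≠ 0)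
    (hD : ∀ᶠ z in l, D.eval z ≠ 0) :
    (fun z => A.eval z / B.eval z) =O[l] (fun z => C.eval z / D.eval z) := by
  have key := ((isBigO_cobounded_of_degree_le hdeg).mono hl).mul
    (isBigO_refl (fun z => ((B * D).eval z)⁻¹) l)
  refine key.congr' ?_ ?_
  · filter_upwards [hD] with z hz
    simp only [eval_mul]
    field_simp
  · filter_upwards [hB] with z hz
    simp only [eval_mul]
    field_simp

end Polynomial

namespace Complex

lemma comap_re_atTop_le_cobounded : comap re atTop ≤ cobounded ℂ := by
  have : Tendsto (‖·‖) (comap re atTop) atTop := tendsto_atTop_mono re_le_norm tendsto_comap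
  exact tendsto_norm_atTop_iff_cobounded.mp this

lemma isLittleO_exp_neg_mul {a b : ℝ} (hab : a < b) :
    (fun z => exp (-(b : ℂ) * z)) =o[comap re atTop] (fun z => exp (-(a : ℂ) * z)) := by
  refine isLittleO_of_tendsto (fun z hz => absurd hz (exp_ne_zero _)) ?_
  have : ∀ z : ℂ, exp (-(b : ℂ) * z) / exp (-(a : ℂ) * z) = exp (-((b - a : ℝ) : ℂ) * z) := by
    intro z; rw [← exp_sub]; push_cast; ring_nf
  simp_rw [this, tendsto_exp_nhds_zero_iff]
  have hba : 0 < b - a := sub_pos.mpr hab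
  simpa using tendsto_comap.const_mul_atTop_of_neg (neg_neg_of_pos hba)

lemma tendsto_I_mul_ofReal_atTop_cobounded :
    Tendsto (fun ω : ℝ => I * ω) atTop (cobounded ℂ) := by
  refine tendsto_norm_atTop_iff_cobounded.mp ?_
  simpa using tendsto_abs_atTop_atTop

end Complex

lemma eventually_sum_mul_exp_ne_zero {ι : Type*} [Fintype ι] (F : ι → ℂ → ℂ) (h : ι → ℝ)
    (i0 : ι) (hh : ∀ i ≠ i0, h i0 < h i) (hF : ∀ i, F i =O[comap re atTop] F i0)
    (hF0 : ∀ᶠ z in comap re atTop, F i0 z ≠ 0) :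
    ∀ᶠ z in comap re atTop, ∑ i, F i z * exp (-(h i : ℂ) * z) ≠ 0 := by
  classical
  have htail : (fun z => ∑ i ∈ univ.erase i0, F i z * exp (-(h i : ℂ) * z)) =o[comap re atTop]
      (fun z => F i0 z * exp (-(h i0 : ℂ) * z)) :=
    IsLittleO.fun_sum fun i hi =>
      (hF i).mul_isLittleO (isLittleO_exp_neg_mul (hh i (ne_of_mem_erase hi)))
  filter_upwards [htail.right_isBigO_add.eq_zero_imp, hF0] with z hz hz0
  rw [← sum_erase_add _ _ (mem_univ i0)]
  exact fun hsum => mul_ne_zero hz0 (exp_ne_zero _) (hz hsum)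

theorem stmt13_general (n : ℕ) (hn : 0 < n) (p q : Fin n → Polynomial ℝ) (h : Fin n → ℝ)
    (i0 : Fin n) (hi0 : i0 = ⟨0, hn⟩)
    (hmono : StrictMono h)
    (hstable : ∀ i, ∀ z : ℂ, 0 ≤ z.re → ((q i).map (algebraMap ℝ ℂ)).eval z ≠ 0)
    (hp1 : p i0 ≠ 0)
    (ξ : Fin n → ℂ)
    (hξ : ∀ i, Tendsto (fun ω : ℝ => ratTerm p q i (Complex.I * ω) /
        ratTerm p q i0 (Complex.I * ω)) atTop (nhds (ξ i))) :
    ∃ σ₁ > (0 : ℝ), ∀ s : ℂ, 0 < s.re → delaySys p q h s = 0 → s.re ≤ σ₁ := by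
  set P : Fin n → ℂ[X] := fun i => (p i).map (algebraMap ℝ ℂ)
  set Q : Fin n → ℂ[X] := fun i => (q i).map (algebraMap ℝ ℂ)
  have hQ : ∀ i, ∀ᶠ z in comap re atTop, (Q i).eval z ≠ 0 := fun i =>
    (tendsto_comap.eventually (eventually_ge_atTop 0)).mono (hstable i)
  have hQne : ∀ i, Q i ≠ 0 := fun i hQi => hstable i 0 le_rfl (by simp [Q, hQi])
  have hP0 : P i0 ≠ 0 := (Polynomial.map_ne_zero_iff (algebraMap ℝ ℂ).injective).mpr hp1
  have hdeg : ∀ i, (P i * Q i0).degree ≤ (P i0 * Q i).degree := by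
    intro i
    refine degree_le_of_tendsto_eval_div (mul_ne_zero hP0 (hQne i))
      tendsto_I_mul_ofReal_atTop_cobounded ((hξ i).congr fun ω => ?_)
    simp only [ratTerm, P, Q, eval_mul, div_div_div_eq, mul_comm]
  have hh : ∀ i ≠ i0, h i0 < h i := fun i hi => hmono <| by
    rw [hi0] at hi ⊢
    exact Fin.lt_def.mpr (Nat.pos_of_ne_zero fun h0 => hi (Fin.ext h0))
  have hF0 : ∀ᶠ z in comap re atTop, ratTerm p q i0 z ≠ 0 := by
    filter_upwards [comap_re_atTop_le_cobounded (eventually_cobounded_eval_ne_zero hP0), hQ i0]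
      with z hPz hQz using div_ne_zero hPz hQz
  obtain ⟨σ, hσ⟩ := eventually_atTop.mp <| eventually_comap.mp <|
    eventually_sum_mul_exp_ne_zero _ h i0 hh
      (fun i => isBigO_eval_div_eval (hdeg i) comap_re_atTop_le_cobounded (hQ i) (hQ i0)) hF0
  refine ⟨max σ 1, by positivity, fun s _ hs => ?_⟩
  by_contra! hlt
  exact hσ s.re (le_max_left σ 1 |>.trans hlt.le) s rfl hs

/-- formalizable essence: the unstable zeros of a neutral-type delay system
have uniformly bounded real parts, i.e. they lie in a vertical strip `0 < Re s ≤ σ₁`. -/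
theorem stmt13 (n : ℕ) (hn : 0 < n) (p q : Fin n → Polynomial ℝ) (h : Fin n → ℝ)
    (i0 : Fin n) (hi0 : i0 = ⟨0, hn⟩)
    (hpos : ∀ i, 0 ≤ h i) (hmono : StrictMono h)
    (hstable : ∀ i, ∀ z : ℂ, 0 ≤ z.re → ((q i).map (algebraMap ℝ ℂ)).eval z ≠ 0)
    (hproper : ∀ i, (p i).natDegree ≤ (q i).natDegree)
    (hp1 : p i0 ≠ 0)
    (d : Fin n → ℕ) (hd : ∀ i, d i = (q i).natDegree - (p i).natDegree)
    (hneutral : d i0 = (Finset.univ.erase i0).sup d)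
    (ξ : Fin n → ℂ)
    (hξ : ∀ i, Tendsto (fun ω : ℝ => ratTerm p q i (Complex.I * ω) /
        ratTerm p q i0 (Complex.I * ω)) atTop (nhds (ξ i))) :
    ∃ σ₁ > (0 : ℝ), ∀ s : ℂ, 0 < s.re → delaySys p q h s = 0 → s.re ≤ σ₁ :=
  stmt13_general n hn p q h i0 hi0 hmono hstable hp1 ξ hξ
end
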